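/- arXiv:2401.05575 — 2 statements merged into one kernel-verified Lean document; each statement's English description precedes it below -/
import Mathlib

section
/- The equation (1 - q^{2Δ})(1 - q^{2-2Δ})/(1 - q²)² + m² = 0 with Δ = 1/2 + iρ (ρ real) gives m² = (1 + q² - 2q cos(2ρ log q))/(1 - q²)², and consequently 1/(1+q)² ≤ m² ≤ 1/(1-q)² for all real ρ. -/
/-- With `Δ = 1/2 + iρ`, the eigenvalue equation
`(1 - q^{2Δ})(1 - q^{2-2Δ})/(1 - q²)² = m²` gives
`m² = (1 + q² - 2q cos(2ρ log q))/(1 - q²)², and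
`1/(1+q)² ≤ m² ≤ 1/(1-q)²`. -/
theorem stmt9 (q ρ : ℝ) (hq0 : 0 < q) (hq1 : q < 1) (msq : ℝ) (Δ : ℂ)
    (hΔ : Δ = 1 / 2 + ρ * Complex.I)
    (hmsq : (msq : ℂ) =
      (1 - Complex.exp (2 * Δ * (Real.log q : ℂ))) *
        (1 - Complex.exp ((2 - 2 * Δ) * (Real.log q : ℂ))) / ((1 - (q : ℂ) ^ 2) ^ 2)) :
    msq = (1 + q ^ 2 - 2 * q * Real.cos (2 * ρ * Real.log q)) / (1 - q ^ 2) ^ 2 ∧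
    1 / (1 + q) ^ 2 ≤ msq ∧ msq ≤ 1 / (1 - q) ^ 2 := by
  set θ : ℝ := 2 * ρ * Real.log q with hθ
  have hexpL : Complex.exp (Real.log q : ℂ) = (q : ℂ) := by
    rw [← Complex.ofReal_exp, Real.exp_log hq0]
  have h1 : Complex.exp (2 * Δ * (Real.log q : ℂ)) =
      (q : ℂ) * ((Real.cos θ : ℂ) + (Real.sin θ : ℂ) * Complex.I) := by
    have harg : 2 * Δ * (Real.log q : ℂ) = (Real.log q : ℂ) + (θ : ℂ) * Complex.I := by
      rw [hΔ, hθ]; push_cast; ring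
    rw [harg, Complex.exp_add, Complex.exp_mul_I, hexpL, ← Complex.ofReal_cos,
      ← Complex.ofReal_sin]
    try push_cast
    try ring
  have h2 : Complex.exp ((2 - 2 * Δ) * (Real.log q : ℂ)) =
      (q : ℂ) * ((Real.cos θ : ℂ) - (Real.sin θ : ℂ) * Complex.I) := by
    have harg : (2 - 2 * Δ) * (Real.log q : ℂ) = (Real.log q : ℂ) + ((-θ : ℝ) : ℂ) * Complex.I := by
      rw [hΔ, hθ]; push_cast; ring
    rw [harg, Complex.exp_add, Complex.exp_mul_I, hexpL, ← Complex.ofReal_cos,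
      ← Complex.ofReal_sin, Real.cos_neg, Real.sin_neg]
    try push_cast
    try ring
  have hq2 : (0 : ℝ) < 1 - q ^ 2 := by nlinarith
  have hden' : (1 - q ^ 2 : ℝ) ≠ 0 := ne_of_gt hq2
  have hcast : ((1 : ℂ) - (q : ℂ) ^ 2) = ((1 - q ^ 2 : ℝ) : ℂ) := by push_cast; ring
  have htrig : Real.sin θ ^ 2 + Real.cos θ ^ 2 = 1 := Real.sin_sq_add_cos_sq θ
  have hc : (Real.sin θ : ℂ) ^ 2 + (Real.cos θ : ℂ) ^ 2 = 1 := by exact_mod_cast htrig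
  have hi : Complex.I ^ 2 = -1 := Complex.I_sq
  have hnum : ((1 : ℂ) - (q : ℂ) * ((Real.cos θ : ℂ) + (Real.sin θ : ℂ) * Complex.I)) *
      (1 - (q : ℂ) * ((Real.cos θ : ℂ) - (Real.sin θ : ℂ) * Complex.I)) =
      ((1 + q ^ 2 - 2 * q * Real.cos θ : ℝ) : ℂ) := by
    have hc2 : Complex.sin (θ : ℂ) ^ 2 + Complex.cos (θ : ℂ) ^ 2 = 1 :=
      Complex.sin_sq_add_cos_sq _
    try push_cast
    linear_combination (q : ℂ) ^ 2 * hc2 - (q : ℂ) ^ 2 * Complex.sin (θ : ℂ) ^ 2 * hi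
  have key : msq = (1 + q ^ 2 - 2 * q * Real.cos θ) / (1 - q ^ 2) ^ 2 := by
    have : (msq : ℂ) = (((1 + q ^ 2 - 2 * q * Real.cos θ) / (1 - q ^ 2) ^ 2 : ℝ) : ℂ) := by
      rw [hmsq, h1, h2, hnum, hcast]
      push_cast
      ring
    exact_mod_cast this
  have hcos1 : Real.cos θ ≤ 1 := Real.cos_le_one θ
  have hcos2 : -1 ≤ Real.cos θ := Real.neg_one_le_cos θ
  have hdpos : (0 : ℝ) < (1 - q ^ 2) ^ 2 := pow_pos hq2 2
  refine ⟨key, ?_, ?_⟩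
  · rw [key, div_le_div_iff₀ (by positivity) hdpos]
    nlinarith [mul_nonneg (by nlinarith : (0 : ℝ) ≤ 2 * q * (1 - Real.cos θ)) (sq_nonneg (1 + q))]
  · rw [key, div_le_div_iff₀ hdpos (pow_pos (by linarith : (0:ℝ) < 1 - q) 2)]
    nlinarith [mul_nonneg (by nlinarith : (0 : ℝ) ≤ 2 * q * (1 + Real.cos θ)) (sq_nonneg (1 - q))]
end

section
/- Let d₁ = Σᵢ mᵢ¹⊗nᵢ¹ and d₂ = Σⱼ mⱼ²⊗nⱼ² be elements of M⊗N (M, N algebras carrying an action of generators E, F, K satisfying the twisted Leibniz rules E(xy)=E(x)y+K(x)E(y), F(xy)=F(x)K⁻¹(y)+xF(y), K(xy)=K(x)K(y), with K an algebra automorphism). If E, F annihilate d₁ and d₂ and K fixes them (under the coproduct action E↦E⊗1+K⊗E etc.), then d₃ = Σ_{i,j} mᵢ¹mⱼ² ⊗ nⱼ²nᵢ¹ is also annihilated by E and F and fixed by K. -/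
open scoped TensorProduct

section Aux

variable {R : Type*} [CommRing R] {M N : Type*} [Ring M] [Algebra R M] [Ring N] [Algebra R N]

/-- The "opposite product" bilinear map `(m⊗n, m'⊗n') ↦ (m*m') ⊗ (n'*n)`. -/
noncomputable def Bmap : M ⊗[R] N →ₗ[R] M ⊗[R] N →ₗ[R] M ⊗[R] N :=
  TensorProduct.lift <| LinearMap.mk₂ R
    (fun m n => TensorProduct.map (LinearMap.mulLeft R m) (LinearMap.mulRight R n))
    (fun m₁ m₂ n => by
      apply TensorProduct.ext'
      intro x y
      simp [add_mul, TensorProduct.add_tmul])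
    (fun c m n => by
      apply TensorProduct.ext'
      intro x y
      simp [smul_mul_assoc, TensorProduct.smul_tmul'])
    (fun m n₁ n₂ => by
      apply TensorProduct.ext'
      intro x y
      simp [mul_add, TensorProduct.tmul_add])
    (fun c m n => by
      apply TensorProduct.ext'
      intro x y
      simp [mul_smul_comm])

@[simp] lemma Bmap_tmul (m m' : M) (n n' : N) :
    Bmap (R := R) (m ⊗ₜ n) (m' ⊗ₜ n') = (m * m') ⊗ₜ (n' * n) := by
  simp [Bmap]

lemma inv_mul_of_mul (K Ki : N →ₗ[R] N) (hmul : ∀ x y : N, K (x * y) = K x * K y)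
    (h1 : K ∘ₗ Ki = LinearMap.id) (h2 : Ki ∘ₗ K = LinearMap.id) (a b : N) :
    Ki (a * b) = Ki a * Ki b := by
  have e1 : ∀ x, K (Ki x) = x := fun x => congrFun (congrArg DFunLike.coe h1) x
  have e2 : ∀ x, Ki (K x) = x := fun x => congrFun (congrArg DFunLike.coe h2) x
  calc Ki (a * b) = Ki (K (Ki a) * K (Ki b)) := by rw [e1, e1]
    _ = Ki (K (Ki a * Ki b)) := by rw [hmul]
    _ = Ki a * Ki b := e2 _

end Aux

/-- If `d₁, d₂ ∈ M ⊗ N` are invariant for the `U_q`-type action (twisted Leibniz rules on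
the module-algebras `M`, `N`, coproduct action `E ↦ E⊗1 + K⊗E`, `F ↦ F⊗K⁻¹ + 1⊗F`,
`K ↦ K⊗K` on the tensor product), then the opposite product
`d₃ = Σ_{i,j} mᵢ¹mⱼ² ⊗ nⱼ²nᵢ¹` is also invariant. -/
theorem stmt19 {R : Type*} [CommRing R]
    {M N : Type*} [Ring M] [Algebra R M] [Ring N] [Algebra R N]
    (EM FM KM KMi : M →ₗ[R] M) (EN FN KN KNi : N →ₗ[R] N)
    -- K is an algebra automorphism (with inverse K⁻¹) on each factor
    (hKM1 : KM 1 = 1) (hKMmul : ∀ x y : M, KM (x * y) = KM x * KM y)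
    (hKMi : KM ∘ₗ KMi = LinearMap.id) (hKiM : KMi ∘ₗ KM = LinearMap.id)
    (hKN1 : KN 1 = 1) (hKNmul : ∀ x y : N, KN (x * y) = KN x * KN y)
    (hKNi : KN ∘ₗ KNi = LinearMap.id) (hKiN : KNi ∘ₗ KN = LinearMap.id)
    -- twisted Leibniz rules
    (hEM : ∀ x y : M, EM (x * y) = EM x * y + KM x * EM y)
    (hFM : ∀ x y : M, FM (x * y) = FM x * KMi y + x * FM y)
    (hEN : ∀ x y : N, EN (x * y) = EN x * y + KN x * EN y)
    (hFN : ∀ x y : N, FN (x * y) = FN x * KNi y + x * FN y)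
    -- the coproduct action on M ⊗ N
    (ET FT KT : M ⊗[R] N →ₗ[R] M ⊗[R] N)
    (hET : ET = TensorProduct.map EM LinearMap.id + TensorProduct.map KM EN)
    (hFT : FT = TensorProduct.map FM KNi + TensorProduct.map LinearMap.id FN)
    (hKT : KT = TensorProduct.map KM KN)
    -- the two invariant elements, as finite sums of simple tensors
    {ι κ : Type*} (s : Finset ι) (t : Finset κ)
    (m₁ : ι → M) (n₁ : ι → N) (m₂ : κ → M) (n₂ : κ → N)
    (d₁ d₂ d₃ : M ⊗[R] N)
    (hd₁ : d₁ = ∑ i ∈ s, m₁ i ⊗ₜ n₁ i) (hd₂ : d₂ = ∑ j ∈ t, m₂ j ⊗ₜ n₂ j)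
    (hE₁ : ET d₁ = 0) (hF₁ : FT d₁ = 0) (hK₁ : KT d₁ = d₁)
    (hE₂ : ET d₂ = 0) (hF₂ : FT d₂ = 0) (hK₂ : KT d₂ = d₂)
    (hd₃ : d₃ = ∑ i ∈ s, ∑ j ∈ t, (m₁ i * m₂ j) ⊗ₜ (n₂ j * n₁ i)) :
    ET d₃ = 0 ∧ FT d₃ = 0 ∧ KT d₃ = d₃ := by
  have hKMimul : ∀ x y : M, KMi (x * y) = KMi x * KMi y :=
    inv_mul_of_mul KM KMi hKMmul hKMi hKiM
  have hKNimul : ∀ x y : N, KNi (x * y) = KNi x * KNi y :=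
    inv_mul_of_mul KN KNi hKNmul hKNi hKiN
  -- d₃ is the opposite product of d₁ and d₂
  have hB : d₃ = Bmap d₁ d₂ := by
    rw [hd₁, hd₂, hd₃, map_sum]
    simp only [LinearMap.coe_sum, Finset.sum_apply, map_sum, Bmap_tmul]
    rw [Finset.sum_comm]
  -- Twisted Leibniz for ET on the opposite product
  have hETB : ∀ x y : M ⊗[R] N, ET (Bmap x y) =
      Bmap (TensorProduct.map EM LinearMap.id x) y
      + Bmap (TensorProduct.map KM LinearMap.id x) (ET y)
      + Bmap (TensorProduct.map KM EN x) (KT y) := by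
    intro x y
    induction x with
    | zero => simp
    | add a b ha hb => simp only [map_add, LinearMap.add_apply, ha, hb]; abel
    | tmul m n =>
      induction y with
      | zero => simp
      | add a b ha hb => simp only [map_add, LinearMap.add_apply, ha, hb] <;> abel
      | tmul m' n' =>
        subst hET hKT
        simp only [LinearMap.add_apply, TensorProduct.map_tmul, LinearMap.id_coe, id_eq,
          Bmap_tmul, map_add, hEM, hEN, hKMmul, hKNmul, TensorProduct.tmul_add,
          TensorProduct.add_tmul]
        abel
  have hFTB : ∀ x y : M ⊗[R] N, FT (Bmap x y) =
      Bmap (TensorProduct.map FM KNi x) (TensorProduct.map KMi KNi y)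
      + Bmap (TensorProduct.map LinearMap.id KNi x) (FT y)
      + Bmap (TensorProduct.map LinearMap.id FN x) y := by
    intro x y
    induction x with
    | zero => simp
    | add a b ha hb => simp only [map_add, LinearMap.add_apply, ha, hb]; abel
    | tmul m n =>
      induction y with
      | zero => simp
      | add a b ha hb => simp only [map_add, LinearMap.add_apply, ha, hb]; abel
      | tmul m' n' =>
        subst hFT
        simp only [LinearMap.add_apply, TensorProduct.map_tmul, LinearMap.id_coe, id_eq,
          Bmap_tmul, map_add, hFM, hFN, hKNimul, TensorProduct.tmul_add,
          TensorProduct.add_tmul]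
        abel
  have hKTB : ∀ x y : M ⊗[R] N, KT (Bmap x y) = Bmap (KT x) (KT y) := by
    intro x y
    induction x with
    | zero => simp
    | add a b ha hb => simp only [map_add, LinearMap.add_apply, ha, hb]
    | tmul m n =>
      induction y with
      | zero => simp
      | add a b ha hb => simp only [map_add, LinearMap.add_apply, ha, hb]
      | tmul m' n' =>
        subst hKT
        simp [hKMmul, hKNmul]
  -- K⁻¹⊗K⁻¹ fixes d₂
  have hKi₂ : TensorProduct.map KMi KNi d₂ = d₂ := by
    conv_lhs => rw [← hK₂, hKT]
    rw [← LinearMap.comp_apply, ← TensorProduct.map_comp, hKiM, hKiN,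
      TensorProduct.map_id, LinearMap.id_apply]
  refine ⟨?_, ?_, ?_⟩
  · rw [hB, hETB, hE₂, hK₂, map_zero, add_zero]
    have h0 : TensorProduct.map EM LinearMap.id d₁ + TensorProduct.map KM EN d₁ = 0 := by
      rw [← LinearMap.add_apply, ← hET, hE₁]
    rw [← LinearMap.add_apply, ← map_add, h0]
    simp
  · rw [hB, hFTB, hF₂, hKi₂, map_zero, add_zero]
    have h0 : TensorProduct.map FM KNi d₁ + TensorProduct.map LinearMap.id FN d₁ = 0 := by
      rw [← LinearMap.add_apply, ← hFT, hF₁]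
    rw [← LinearMap.add_apply, ← map_add, h0]
    simp
  · rw [hB, hKTB, hK₁, hK₂]
end
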